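/- arXiv:1309.5522 — 2 statements merged into one kernel-verified Lean document; each statement's English description precedes it below -/
import Mathlib

section
/- If a history contains a forward zone that contains the low endpoints of three other forward zones, then the history is not 2-atomic. -/
open scoped Classical

/-- An operation on a single register. -/
structure Op where
  s : ℝ
  f : ℝ
  isRead : Bool
  val : ℕ

abbrev History := Finset Op

def Op.isWrite (op : Op) : Prop := op.isRead = false

/-- Well-formedness of a history: operations have positive duration, all endpoints
are distinct, writes have distinct values, and every read has a dictating write
that finishes before the read starts. -/
def Wf (H : History) : Prop :=
  (∀ op ∈ H, op.s < op.f) ∧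
  (∀ op1 ∈ H, ∀ op2 ∈ H, op1 ≠ op2 →
    op1.s ≠ op2.s ∧ op1.f ≠ op2.f ∧ op1.s ≠ op2.f) ∧
  (∀ w1 ∈ H, ∀ w2 ∈ H, w1.isWrite → w2.isWrite → w1.val = w2.val → w1 = w2) ∧
  (∀ r ∈ H, r.isRead = true → ∃ w ∈ H, w.isWrite ∧ w.val = r.val ∧ w.f < r.s)

/-- `a` occurs before `b` in the total order represented by the list `l`. -/
def Before (l : List Op) (a b : Op) : Prop :=
  ∃ l1 l2 l3, l = l1 ++ a :: l2 ++ b :: l3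

/-- A total order (list) is valid if it respects real-time precedence. -/
def Valid (l : List Op) : Prop :=
  ∀ a ∈ l, ∀ b ∈ l, a.f < b.s → Before l a b

/-- `l` is a total order on exactly the operations of `H`. -/
def IsLinearization (H : History) (l : List Op) : Prop :=
  l.Nodup ∧ ∀ op, op ∈ l ↔ op ∈ H

/-- In the total order `l`, every read follows its dictating write, separated from
it by at most `k - 1` other writes. -/
def KAtomicOrder (k : ℕ) (l : List Op) : Prop :=
  ∀ r ∈ l, r.isRead = true → ∀ w ∈ l, w.isWrite → w.val = r.val →
    ∃ l1 l2 l3, l = l1 ++ w :: l2 ++ r :: l3 ∧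
      (l2.filter (fun op => op.isRead = false)).length ≤ k - 1

/-- A history is `k`-atomic if it has a valid `k`-atomic total order. -/
def KAtomic (k : ℕ) (H : History) : Prop :=
  ∃ l, IsLinearization H l ∧ Valid l ∧ KAtomicOrder k l

/-- The cluster of a write `w`: the write together with its dictated reads. -/
noncomputable def cluster (H : History) (w : Op) : Finset Op :=
  insert w (H.filter (fun r => r.isRead = true ∧ r.val = w.val))

/-- Minimum finish time over the cluster of `w`. -/
noncomputable def fmin (H : History) (w : Op) : ℝ :=
  (cluster H w).inf' (Finset.insert_nonempty _ _) Op.f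

/-- Maximum start time over the cluster of `w`. -/
noncomputable def smax (H : History) (w : Op) : ℝ :=
  (cluster H w).sup' (Finset.insert_nonempty _ _) Op.s

/-- The zone of `w`'s cluster is forward if its minimum finish time is less than
its maximum start time. -/
def ForwardZone (H : History) (w : Op) : Prop := fmin H w < smax H w

/-- Low endpoint of the zone of `w`'s cluster. -/
noncomputable def zoneL (H : History) (w : Op) : ℝ := min (fmin H w) (smax H w)

/-- High endpoint of the zone of `w`'s cluster. -/
noncomputable def zoneH (H : History) (w : Op) : ℝ := max (fmin H w) (smax H w)

/-- The zone of `w`'s cluster, as a closed interval of time. -/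
noncomputable def zone (H : History) (w : Op) : Set ℝ := Set.Icc (zoneL H w) (zoneH H w)

/-! Let `a_i` be the operation of cluster `i` that finishes first and `b_i` the one that
starts last; for a forward zone `b_i` is a read and zone `i` is `[a_i.f, b_i.s]`. If
`a_i.f ∈ [a_0.f, b_0.s]` for `i = 1, 2, 3`, real-time order puts `a_i`, hence `w_i`, before `b_0`,
and `a_0`, hence `w_0`, before `b_i`. A 2-atomic order admits at most one other write between `w_0`
and its read `b_0`, so two of `w_1, w_2, w_3`, say `w_i` before `w_j`, precede `w_0`; then `w_j`
and `w_0` both lie between `w_i` and its read `b_i`. -/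

theorem List.eq_of_mem_of_length_le_one {α : Type*} {l : List α} {x y : α} (hl : l.length ≤ 1)
    (hx : x ∈ l) (hy : y ∈ l) : x = y := by
  rcases l with _ | ⟨c, _ | ⟨d, l⟩⟩ <;> simp_all

namespace List

variable {α : Type*} [BEq α] [LawfulBEq α] {l₁ l₂ l₃ : List α} {a b x : α}

theorem mem_iff_idxOf_append_lt_length : x ∈ l₁ ↔ (l₁ ++ l₂).idxOf x < l₁.length := by
  rw [idxOf_append]
  split_ifs with h
  · exact iff_of_true h (idxOf_lt_length_of_mem h)
  · exact iff_of_false h (by omega)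

theorem idxOf_append_cons_of_notMem (h : a ∉ l₁) : (l₁ ++ a :: l₂).idxOf a = l₁.length := by
  simp [idxOf_append, h]

theorem Nodup.idxOf_append_cons_left (hl : (l₁ ++ a :: l₂ ++ b :: l₃).Nodup) :
    (l₁ ++ a :: l₂ ++ b :: l₃).idxOf a = l₁.length := by
  rw [append_assoc, cons_append, nodup_append] at hl
  rw [append_assoc, cons_append]
  exact idxOf_append_cons_of_notMem fun h => hl.2.2 a h a mem_cons_self rfl

theorem Nodup.idxOf_append_cons_right (hl : (l₁ ++ a :: l₂ ++ b :: l₃).Nodup) :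
    (l₁ ++ a :: l₂ ++ b :: l₃).idxOf b = (l₁ ++ a :: l₂).length := by
  rw [nodup_append] at hl
  exact idxOf_append_cons_of_notMem fun h => hl.2.2 b h b mem_cons_self rfl

theorem Nodup.mem_of_idxOf_between (hl : (l₁ ++ a :: l₂ ++ b :: l₃).Nodup)
    (hax : (l₁ ++ a :: l₂ ++ b :: l₃).idxOf a < (l₁ ++ a :: l₂ ++ b :: l₃).idxOf x)
    (hxb : (l₁ ++ a :: l₂ ++ b :: l₃).idxOf x < (l₁ ++ a :: l₂ ++ b :: l₃).idxOf b) :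
    x ∈ l₂ := by
  rw [hl.idxOf_append_cons_left] at hax
  rw [hl.idxOf_append_cons_right] at hxb
  have hmem : x ∈ l₁ ++ a :: l₂ := mem_iff_idxOf_append_lt_length.2 hxb
  have hsplit : l₁ ++ a :: l₂ ++ b :: l₃ = (l₁ ++ [a]) ++ (l₂ ++ b :: l₃) := by simp
  have hnot : x ∉ l₁ ++ [a] := by
    rw [mem_iff_idxOf_append_lt_length, ← hsplit, length_append, length_singleton]
    omega
  simp only [mem_append, mem_cons] at hmem hnot
  tauto

end List

def Dictates (w r : Op) : Prop := w.isWrite ∧ r.isRead = true ∧ w.val = r.val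

section Orders

variable {l : List Op} {a b r w : Op}

theorem Before.idxOf_lt (hl : l.Nodup) (h : Before l a b) : l.idxOf a < l.idxOf b := by
  obtain ⟨l₁, l₂, l₃, rfl⟩ := h
  rw [hl.idxOf_append_cons_left, hl.idxOf_append_cons_right]
  simp

theorem Valid.idxOf_lt (hv : Valid l) (hl : l.Nodup) (ha : a ∈ l) (hb : b ∈ l) (hab : a.f < b.s) :
    l.idxOf a < l.idxOf b :=
  (hv a ha b hb hab).idxOf_lt hl

theorem KAtomicOrder.idxOf_lt {k : ℕ} (hk : KAtomicOrder k l) (hl : l.Nodup) (hw : w ∈ l)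
    (hr : r ∈ l) (hd : Dictates w r) : l.idxOf w < l.idxOf r := by
  obtain ⟨l₁, l₂, l₃, rfl, -⟩ := hk r hr hd.2.1 w hw hd.1 hd.2.2
  exact Before.idxOf_lt hl ⟨l₁, l₂, l₃, rfl⟩

theorem KAtomicOrder.eq_of_writes_between (hk : KAtomicOrder 2 l) (hl : l.Nodup) (hw : w ∈ l)
    (hr : r ∈ l) (hd : Dictates w r) {x y : Op} (hxW : x.isWrite) (hyW : y.isWrite)
    (hwx : l.idxOf w < l.idxOf x) (hxr : l.idxOf x < l.idxOf r)
    (hwy : l.idxOf w < l.idxOf y) (hyr : l.idxOf y < l.idxOf r) : x = y := by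
  obtain ⟨l₁, l₂, l₃, hdec, hcount⟩ := hk r hr hd.2.1 w hw hd.1 hd.2.2
  have hwrite : ∀ z, l.idxOf w < l.idxOf z → l.idxOf z < l.idxOf r → z.isWrite →
      z ∈ l₂.filter (fun op => op.isRead = false) := by
    intro z hwz hzr hzW
    subst hdec
    exact List.mem_filter.2 ⟨hl.mem_of_idxOf_between hwz hzr, by simpa [Op.isWrite] using hzW⟩
  exact List.eq_of_mem_of_length_le_one hcount (hwrite x hwx hxr hxW) (hwrite y hwy hyr hyW)

end Orders

theorem mem_cluster_iff {H : History} {w x : Op} :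
    x ∈ cluster H w ↔ x = w ∨ x ∈ H ∧ x.isRead = true ∧ x.val = w.val := by
  simp [cluster]

section History

variable {H : History} {l : List Op} {a b r w : Op}

theorem Wf.finish_lt_start (hWf : Wf H) (ha : a ∈ H) (hb : b ∈ H) (hab : a.f ≤ b.s) :
    a.f < b.s := by
  refine lt_of_le_of_ne hab fun h => ?_
  by_cases hne : a = b
  · subst hne
    linarith [hWf.1 a ha]
  · exact (hWf.2.1 b hb a ha (Ne.symm hne)).2.2 h.symm

theorem Wf.finish_lt_start_of_read (hWf : Wf H) (hw : w ∈ H) (hr : r ∈ H) (hd : Dictates w r) :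
    w.f < r.s := by
  obtain ⟨w', hw', hw'W, hv, hlt⟩ := hWf.2.2.2 r hr hd.2.1
  rwa [hWf.2.2.1 w' hw' w hw hw'W hd.1 (hv.trans hd.2.2.symm)] at hlt

theorem Wf.finish_le_fmin (hWf : Wf H) (hw : w ∈ H) (hwW : w.isWrite) : w.f ≤ fmin H w := by
  refine Finset.le_inf' _ _ fun x hx => ?_
  rcases mem_cluster_iff.1 hx with rfl | ⟨hxH, hxR, hv⟩
  · exact le_rfl
  · linarith [hWf.finish_lt_start_of_read hw hxH ⟨hwW, hxR, hv.symm⟩, hWf.1 x hxH]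

theorem ForwardZone.zone_eq (hf : ForwardZone H w) : zone H w = Set.Icc (fmin H w) (smax H w) := by
  rw [zone, zoneL, zoneH, min_eq_left hf.le, max_eq_right hf.le]

/-- In a forward zone the latest start is not the write's own start, so it is a read's. -/
theorem ForwardZone.exists_read (hf : ForwardZone H w) (hWf : Wf H) (hw : w ∈ H)
    (hwW : w.isWrite) : ∃ b ∈ H, Dictates w b ∧ b.s = smax H w := by
  obtain ⟨b, hb, hbs⟩ := 
    Finset.exists_mem_eq_sup' (s := cluster H w) (Finset.insert_nonempty w _) Op.s
  rcases mem_cluster_iff.1 hb with rfl | ⟨hbH, hbR, hv⟩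
  · have : smax H b = b.s := hbs
    linarith [hWf.1 b hw, hWf.finish_le_fmin hw hwW, show fmin H b < smax H b from hf]
  · exact ⟨b, hbH, ⟨hwW, hbR, hv.symm⟩, hbs.symm⟩

theorem idxOf_le_of_mem_cluster {k : ℕ} (hlin : IsLinearization H l) (hk : KAtomicOrder k l)
    (hw : w ∈ H) (hwW : w.isWrite) {x : Op} (hx : x ∈ cluster H w) : l.idxOf w ≤ l.idxOf x := by
  rcases mem_cluster_iff.1 hx with rfl | ⟨hxH, hxR, hv⟩
  · exact le_rfl
  · exact (hk.idxOf_lt hlin.1 ((hlin.2 w).2 hw) ((hlin.2 x).2 hxH) ⟨hwW, hxR, hv.symm⟩).le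

theorem idxOf_lt_of_fmin_le {k : ℕ} (hWf : Wf H) (hlin : IsLinearization H l) (hv : Valid l)
    (hk : KAtomicOrder k l) (hw : w ∈ H) (hwW : w.isWrite) (hb : b ∈ H) (hfb : fmin H w ≤ b.s) :
    l.idxOf w < l.idxOf b := by
  obtain ⟨a, ha, haf⟩ := 
    Finset.exists_mem_eq_inf' (s := cluster H w) (Finset.insert_nonempty w _) Op.f
  have haH : a ∈ H := by
    rcases mem_cluster_iff.1 ha with rfl | ⟨haH, -⟩
    exacts [hw, haH]
  have hab : a.f < b.s := hWf.finish_lt_start haH hb (haf ▸ hfb)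
  exact (idxOf_le_of_mem_cluster hlin hk hw hwW ha).trans_lt
    (hv.idxOf_lt hlin.1 ((hlin.2 a).2 haH) ((hlin.2 b).2 hb) hab)

end History

theorem idxOf_lt_of_fmin_mem_zone {k : ℕ} {H : History} {l : List Op} {w₀ b₀ w : Op}
    (hWf : Wf H) (hlin : IsLinearization H l) (hv : Valid l) (hk : KAtomicOrder k l)
    (hw₀ : w₀ ∈ H) (hw₀W : w₀.isWrite) (hf₀ : ForwardZone H w₀) (hb₀ : b₀ ∈ H)
    (hb₀s : b₀.s = smax H w₀) (hw : w ∈ H) (hwW : w.isWrite) (hf : ForwardZone H w)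
    (hc : fmin H w ∈ zone H w₀) :
    l.idxOf w < l.idxOf b₀ ∧ ∃ b ∈ H, Dictates w b ∧ l.idxOf w₀ < l.idxOf b := by
  rw [hf₀.zone_eq] at hc
  obtain ⟨b, hb, hd, hbs⟩ := hf.exists_read hWf hw hwW
  refine ⟨idxOf_lt_of_fmin_le hWf hlin hv hk hw hwW hb₀ (hb₀s ▸ hc.2),
    b, hb, hd, idxOf_lt_of_fmin_le hWf hlin hv hk hw₀ hw₀W hb ?_⟩
  linarith [hc.1, show fmin H w < smax H w from hf]

theorem KAtomicOrder.not_iff_of_crossing {l : List Op} (hk : KAtomicOrder 2 l) (hl : l.Nodup)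
    {w₀ wᵢ wⱼ b₀ bᵢ bⱼ : Op} (hw₀ : w₀ ∈ l) (hwᵢ : wᵢ ∈ l) (hwⱼ : wⱼ ∈ l)
    (hb₀ : b₀ ∈ l) (hbᵢ : bᵢ ∈ l) (hbⱼ : bⱼ ∈ l)
    (hd₀ : Dictates w₀ b₀) (hdᵢ : Dictates wᵢ bᵢ) (hdⱼ : Dictates wⱼ bⱼ)
    (h₀ᵢ : w₀ ≠ wᵢ) (h₀ⱼ : w₀ ≠ wⱼ) (hᵢⱼ : wᵢ ≠ wⱼ)
    (hᵢb₀ : l.idxOf wᵢ < l.idxOf b₀) (hⱼb₀ : l.idxOf wⱼ < l.idxOf b₀)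
    (h₀bᵢ : l.idxOf w₀ < l.idxOf bᵢ) (h₀bⱼ : l.idxOf w₀ < l.idxOf bⱼ) :
    ¬ (l.idxOf wᵢ < l.idxOf w₀ ↔ l.idxOf wⱼ < l.idxOf w₀) := by
  have hne : ∀ {x y}, x ∈ l → x ≠ y → l.idxOf x ≠ l.idxOf y := fun hx hxy h =>
    hxy ((List.idxOf_inj hx).1 h)
  intro hiff
  by_cases hᵢ₀ : l.idxOf wᵢ < l.idxOf w₀
  · have hⱼ₀ := hiff.1 hᵢ₀
    rcases lt_or_gt_of_ne (hne hwᵢ hᵢⱼ) with hᵢⱼ' | hⱼᵢ'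
    · exact h₀ⱼ.symm <| hk.eq_of_writes_between hl hwᵢ hbᵢ hdᵢ hdⱼ.1 hd₀.1 hᵢⱼ'
        (hⱼ₀.trans h₀bᵢ) (hᵢⱼ'.trans hⱼ₀) h₀bᵢ
    · exact h₀ᵢ.symm <| hk.eq_of_writes_between hl hwⱼ hbⱼ hdⱼ hdᵢ.1 hd₀.1 hⱼᵢ'
        (hᵢ₀.trans h₀bⱼ) (hⱼᵢ'.trans hᵢ₀) h₀bⱼ
  · have hⱼ₀ : ¬ l.idxOf wⱼ < l.idxOf w₀ := mt hiff.2 hᵢ₀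
    exact hᵢⱼ <| hk.eq_of_writes_between hl hw₀ hb₀ hd₀ hdᵢ.1 hdⱼ.1
      (lt_of_le_of_ne (not_lt.1 hᵢ₀) (hne hw₀ h₀ᵢ)) hᵢb₀
      (lt_of_le_of_ne (not_lt.1 hⱼ₀) (hne hw₀ h₀ⱼ)) hⱼb₀

/-- If a history contains a forward zone that contains the low endpoints of three
other forward zones, then the history is not 2-atomic. -/
theorem stmt_1 (H : History) (hWf : Wf H)
    (w0 w1 w2 w3 : Op) (h0 : w0 ∈ H) (h1 : w1 ∈ H) (h2 : w2 ∈ H) (h3 : w3 ∈ H)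
    (hw0 : w0.isWrite) (hw1 : w1.isWrite) (hw2 : w2.isWrite) (hw3 : w3.isWrite)
    (h01 : w0 ≠ w1) (h02 : w0 ≠ w2) (h03 : w0 ≠ w3)
    (h12 : w1 ≠ w2) (h13 : w1 ≠ w3) (h23 : w2 ≠ w3)
    (hf0 : ForwardZone H w0) (hf1 : ForwardZone H w1)
    (hf2 : ForwardZone H w2) (hf3 : ForwardZone H w3)
    (hc1 : fmin H w1 ∈ zone H w0) (hc2 : fmin H w2 ∈ zone H w0)
    (hc3 : fmin H w3 ∈ zone H w0) :
    ¬ KAtomic 2 H := by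
  rintro ⟨l, hlin, hv, hk⟩
  have hmem : ∀ {x}, x ∈ H → x ∈ l := fun hx => (hlin.2 _).2 hx
  obtain ⟨b0, hb0, hd0, hb0s⟩ := hf0.exists_read hWf h0 hw0
  obtain ⟨hw1b0, b1, hb1, hd1, hw0b1⟩ :=
    idxOf_lt_of_fmin_mem_zone hWf hlin hv hk h0 hw0 hf0 hb0 hb0s h1 hw1 hf1 hc1
  obtain ⟨hw2b0, b2, hb2, hd2, hw0b2⟩ :=
    idxOf_lt_of_fmin_mem_zone hWf hlin hv hk h0 hw0 hf0 hb0 hb0s h2 hw2 hf2 hc2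
  obtain ⟨hw3b0, b3, hb3, hd3, hw0b3⟩ :=
    idxOf_lt_of_fmin_mem_zone hWf hlin hv hk h0 hw0 hf0 hb0 hb0s h3 hw3 hf3 hc3
  have h12' := hk.not_iff_of_crossing hlin.1 (hmem h0) (hmem h1) (hmem h2) (hmem hb0) (hmem hb1)
    (hmem hb2) hd0 hd1 hd2 h01 h02 h12 hw1b0 hw2b0 hw0b1 hw0b2
  have h13' := hk.not_iff_of_crossing hlin.1 (hmem h0) (hmem h1) (hmem h3) (hmem hb0) (hmem hb1)
    (hmem hb3) hd0 hd1 hd3 h01 h03 h13 hw1b0 hw3b0 hw0b1 hw0b3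
  have h23' := hk.not_iff_of_crossing hlin.1 (hmem h0) (hmem h2) (hmem h3) (hmem hb0) (hmem hb2)
    (hmem hb3) hd0 hd2 hd3 h02 h03 h23 hw2b0 hw3b0 hw0b2 hw0b3
  tauto
end

section
/- If a maximal chunk K of a history H contains three or more backward clusters, then there is no viable total order over all the dictating writes of K; consequently H|K is not 2-atomic. -/
open scoped Classical

/-- Union of the forward zones of the clusters (identified by their dictating
writes) in `K`. -/
def fwdUnion (H : History) (K : Finset Op) : Set ℝ :=
  ⋃ w ∈ {w ∈ (K : Set Op) | ForwardZone H w}, zone H w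

/-- Union of the backward zones of the clusters in `K`. -/
def bwdUnion (H : History) (K : Finset Op) : Set ℝ :=
  ⋃ w ∈ {w ∈ (K : Set Op) | ¬ ForwardZone H w}, zone H w

/-- A chunk: a set of clusters (identified by their dictating writes) whose
forward zones union to a continuous nonempty time interval containing the
union of the chunk's backward zones. -/
def IsChunk (H : History) (K : Finset Op) : Prop :=
  (∀ w ∈ K, w ∈ H ∧ w.isWrite) ∧
  (fwdUnion H K).Nonempty ∧ (fwdUnion H K).OrdConnected ∧
  bwdUnion H K ⊆ fwdUnion H K

/-- A maximal chunk: no further cluster can be added while remaining a chunk. -/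
def MaximalChunk (H : History) (K : Finset Op) : Prop :=
  IsChunk H K ∧ ∀ w ∈ H, w.isWrite → w ∉ K → ¬ IsChunk H (insert w K)

/-- A chunk set of `H`: a set of maximal chunks covering every forward cluster. -/
def ChunkSet (H : History) (CS : Finset (Finset Op)) : Prop :=
  (∀ K ∈ CS, MaximalChunk H K) ∧
  ∀ w ∈ H, w.isWrite → ForwardZone H w → ∃ K ∈ CS, w ∈ K

/-- The projection `H|K` of `H` onto the chunk `K`: all operations of clusters in `K`. -/
noncomputable def proj (H : History) (K : Finset Op) : History :=
  H.filter (fun op => ∃ w ∈ K, op ∈ cluster H w)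

/-- A total order `T` on a set of writes is viable if it extends to a valid total
order `T'` on those writes together with all their dictated reads in `H`, in which
every read follows its dictating write with at most one other write in between. -/
def Viable (H : History) (T : List Op) : Prop :=
  ∃ T' : List Op, T'.Nodup ∧
    (∀ op, op ∈ T' ↔ op ∈ T ∨ (op ∈ H ∧ op.isRead = true ∧ ∃ w ∈ T, w.val = op.val)) ∧
    Valid T' ∧ T'.filter (fun op => op.isRead = false) = T ∧ KAtomicOrder 2 T'

/-- `T` is a valid total order on exactly the writes in `K`. -/
def TotalOrderOn (K : Finset Op) (T : List Op) : Prop :=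
  T.Nodup ∧ (∀ w, w ∈ T ↔ w ∈ K) ∧ Valid T

/-!
Number the writes of a valid 2-atomic order consecutively and give every operation the number
of the last write at or before it. A read then carries the number of its write or the next one,
so if some operation of cluster `c` finishes before some operation of cluster `c'` starts, the
write of `c` is numbered at most one above that of `c'`. Since the forward zones of a chunk
overlap into one interval, the forward clusters receive consecutive numbers `a, …, A`; a
backward zone lies inside the forward zones, which pins its write to `a - 1` or `A + 1`. Hence
at most two clusters of the chunk are backward.
-/

namespace List

def writeCount (l : List Op) : ℕ := (l.filter (fun op => op.isRead = false)).length

@[simp]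
lemma writeCount_append (l₁ l₂ : List Op) :
    writeCount (l₁ ++ l₂) = writeCount l₁ + writeCount l₂ := by
  simp [writeCount, List.filter_append]

lemma writeCount_singleton_of_isWrite {x : Op} (hx : x.isWrite) : writeCount [x] = 1 := by
  simp [writeCount, hx.symm]

lemma writeCount_singleton_of_isRead {x : Op} (hx : x.isRead = true) : writeCount [x] = 0 := by
  simp [writeCount, hx]

noncomputable def writeRank (l : List Op) (o : Op) : ℕ :=
  writeCount (l.takeWhile (· ≠ o)) + writeCount [o]

variable {l : List Op}

lemma writeRank_eq_of_eq_append {l₁ l₂ : List Op} {x : Op} (hnd : l.Nodup)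
    (h : l = l₁ ++ x :: l₂) : l.writeRank x = writeCount l₁ + writeCount [x] := by
  subst h
  have hx : ∀ a ∈ l₁, a ≠ x := fun a ha => (nodup_append.mp hnd).2.2 a ha x mem_cons_self
  rw [writeRank, takeWhile_append_of_pos (by simpa using hx)]
  simp

lemma writeRank_eq_of_eq_append_cons {l₁ l₂ l₃ : List Op} {a b : Op} (hnd : l.Nodup)
    (h : l = l₁ ++ a :: l₂ ++ b :: l₃) :
    l.writeRank b = l.writeRank a + writeCount l₂ + writeCount [b] := by
  rw [writeRank_eq_of_eq_append hnd h,
    writeRank_eq_of_eq_append (l₁ := l₁) (l₂ := l₂ ++ b :: l₃) hnd (by simp [h]),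
    ← singleton_append, writeCount_append, writeCount_append]
  omega

lemma before_or_before {a b : Op} (ha : a ∈ l) (hb : b ∈ l) (hne : a ≠ b) :
    Before l a b ∨ Before l b a := by
  obtain ⟨s, t, rfl⟩ := append_of_mem ha
  rcases mem_append.mp hb with hb | hb
  · obtain ⟨s₁, t₁, rfl⟩ := append_of_mem hb
    exact Or.inr ⟨s₁, t₁, t, by simp⟩
  · obtain ⟨s₂, t₂, rfl⟩ := append_of_mem ((mem_cons.mp hb).resolve_left hne.symm)
    exact Or.inl ⟨s, s₂, t₂, by simp⟩

lemma writeRank_add_le_of_before {a b : Op} (hnd : l.Nodup) (h : Before l a b) :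
    l.writeRank a + writeCount [b] ≤ l.writeRank b := by
  obtain ⟨l₁, l₂, l₃, hl⟩ := h
  rw [writeRank_eq_of_eq_append_cons hnd hl]
  omega

lemma writeRank_injOn (hnd : l.Nodup) :
    Set.InjOn l.writeRank {w | w ∈ l ∧ w.isWrite} := by
  intro a ⟨ha, haw⟩ b ⟨hb, hbw⟩ hab
  by_contra hne
  rcases before_or_before ha hb hne with h | h
  · have := writeRank_add_le_of_before hnd h
    rw [writeCount_singleton_of_isWrite hbw] at this
    omega
  · have := writeRank_add_le_of_before hnd h
    rw [writeCount_singleton_of_isWrite haw] at this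
    omega

lemma writeRank_le_of_kAtomicOrder_two (hnd : l.Nodup) (hka : KAtomicOrder 2 l)
    {r w : Op} (hr : r ∈ l) (hread : r.isRead = true) (hw : w ∈ l) (hwrite : w.isWrite)
    (hval : w.val = r.val) : l.writeRank w ≤ l.writeRank r ∧ l.writeRank r ≤ l.writeRank w + 1 := by
  obtain ⟨l₁, l₂, l₃, hl, hlen⟩ := hka r hr hread w hw hwrite hval
  have : writeCount l₂ ≤ 1 := hlen
  rw [writeRank_eq_of_eq_append_cons hnd hl, writeCount_singleton_of_isRead hread]
  omega

end List

lemma mem_cluster {H : History} {w o : Op} :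
    o ∈ cluster H w ↔ o = w ∨ o ∈ H ∧ o.isRead = true ∧ o.val = w.val := by
  simp [cluster]

lemma mem_of_mem_cluster {H : History} {w o : Op} (hw : w ∈ H) (ho : o ∈ cluster H w) :
    o ∈ H := by
  rcases mem_cluster.mp ho with rfl | ⟨h, -⟩ <;> assumption

lemma disjoint_cluster {H : History} (hWf : Wf H) {c c' : Op} (hc : c ∈ H) (hc' : c' ∈ H)
    (hcw : c.isWrite) (hc'w : c'.isWrite) (hne : c ≠ c') :
    Disjoint (cluster H c) (cluster H c') := by
  rw [Finset.disjoint_left]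
  intro o ho ho'
  rcases mem_cluster.mp ho with rfl | ⟨-, hr, hv⟩ <;>
    rcases mem_cluster.mp ho' with rfl | ⟨-, hr', hv'⟩
  · exact hne rfl
  · simp_all [Op.isWrite]
  · simp_all [Op.isWrite]
  · exact hne (hWf.2.2.1 c hc c' hc' hcw hc'w (hv.symm.trans hv'))

lemma exists_mem_cluster_f_eq_fmin (H : History) (c : Op) :
    ∃ y ∈ cluster H c, y.f = fmin H c := by
  obtain ⟨y, hy, h⟩ := Finset.exists_mem_eq_inf' (Finset.insert_nonempty c _) Op.f
  exact ⟨y, hy, h.symm⟩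

lemma exists_mem_cluster_s_eq_smax (H : History) (c : Op) :
    ∃ x ∈ cluster H c, x.s = smax H c := by
  obtain ⟨x, hx, h⟩ := Finset.exists_mem_eq_sup' (Finset.insert_nonempty c _) Op.s
  exact ⟨x, hx, h.symm⟩

lemma zone_of_forwardZone {H : History} {v : Op} (hv : ForwardZone H v) :
    zone H v = Set.Icc (fmin H v) (smax H v) := by
  rw [zone, zoneL, zoneH, min_eq_left hv.le, max_eq_right hv.le]

lemma zone_of_not_forwardZone {H : History} {b : Op} (hb : ¬ ForwardZone H b) :
    zone H b = Set.Icc (smax H b) (fmin H b) := by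
  rw [ForwardZone, not_lt] at hb
  rw [zone, zoneL, zoneH, min_eq_right hb, max_eq_left hb]

lemma zone_nonempty (H : History) (w : Op) : (zone H w).Nonempty :=
  Set.nonempty_Icc.mpr min_le_max

lemma mem_fwdUnion {H : History} {K : Finset Op} {t : ℝ} :
    t ∈ fwdUnion H K ↔ ∃ v ∈ K, ForwardZone H v ∧ t ∈ zone H v := by
  simp [fwdUnion, and_assoc]

section Linearization

variable {H : History} {l : List Op}

lemma writeRank_mem_cluster (hnd : l.Nodup) (hka : KAtomicOrder 2 l) {c o : Op}
    (hcw : c.isWrite) (hcl : ∀ o ∈ cluster H c, o ∈ l) (ho : o ∈ cluster H c) :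
    l.writeRank c ≤ l.writeRank o ∧ l.writeRank o ≤ l.writeRank c + 1 := by
  rcases mem_cluster.mp ho with rfl | ⟨-, hr, hv⟩
  · exact ⟨le_rfl, Nat.le_succ _⟩
  · exact List.writeRank_le_of_kAtomicOrder_two hnd hka (hcl o ho) hr
      (hcl c (Finset.mem_insert_self c _)) hcw hv.symm

lemma writeRank_le_add_one_of_fmin_le_smax (hWf : Wf H) (hnd : l.Nodup) (hval : Valid l)
    (hka : KAtomicOrder 2 l) {c c' : Op} (hc : c ∈ H) (hc' : c' ∈ H) (hcw : c.isWrite)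
    (hc'w : c'.isWrite) (hne : c ≠ c') (hcl : ∀ o ∈ cluster H c, o ∈ l)
    (hcl' : ∀ o ∈ cluster H c', o ∈ l) (hle : fmin H c ≤ smax H c') :
    l.writeRank c ≤ l.writeRank c' + 1 := by
  obtain ⟨y, hy, hyf⟩ := exists_mem_cluster_f_eq_fmin H c
  obtain ⟨x, hx, hxs⟩ := exists_mem_cluster_s_eq_smax H c'
  have hyx : y ≠ x := fun h =>
    Finset.disjoint_left.mp (disjoint_cluster hWf hc hc' hcw hc'w hne) hy (h ▸ hx)
  have hlt : y.f < x.s := lt_of_le_of_ne (hyf ▸ hxs ▸ hle)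
    (hWf.2.1 x (mem_of_mem_cluster hc' hx) y (mem_of_mem_cluster hc hy) hyx.symm).2.2.symm
  have hyx_rank := List.writeRank_add_le_of_before hnd (hval y (hcl y hy) x (hcl' x hx) hlt)
  have hcy := (writeRank_mem_cluster hnd hka hcw hcl hy).1
  have hxc' := (writeRank_mem_cluster hnd hka hc'w hcl' hx).2
  omega

end Linearization

lemma exists_eq_of_isPreconnected_biUnion {X ι : Type*} [TopologicalSpace X] {F : Set ι}
    (hF : F.Finite) {Z : ι → Set X} (hZ : ∀ v ∈ F, IsClosed (Z v))
    (hZne : ∀ v ∈ F, (Z v).Nonempty) (hconn : IsPreconnected (⋃ v ∈ F, Z v)) {W : ι → ℕ}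
    (hW : ∀ v ∈ F, ∀ v' ∈ F, (Z v ∩ Z v').Nonempty → W v' ≤ W v + 1) {u u' : ι} (hu : u ∈ F)
    (hu' : u' ∈ F) {g : ℕ} (hug : W u ≤ g) (hgu' : g ≤ W u') : ∃ v ∈ F, W v = g := by
  -- The sets labelled below and above a missing value would disconnect the union.
  by_contra! hgap
  have hclosed : ∀ P : ι → Prop, IsClosed (⋃ v ∈ {v ∈ F | P v}, Z v) := fun P =>
    (hF.subset (Set.sep_subset F P)).isClosed_biUnion fun v hv => hZ v hv.1
  have hside : ∀ P : ι → Prop, ∀ v ∈ F, P v →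
      ((⋃ v ∈ F, Z v) ∩ ⋃ v ∈ {v ∈ F | P v}, Z v).Nonempty := by
    intro P v hv hP
    obtain ⟨p, hp⟩ := hZne v hv
    exact ⟨p, Set.mem_biUnion hv hp, Set.mem_biUnion (show v ∈ {v ∈ F | P v} from ⟨hv, hP⟩) hp⟩
  have hcover : (⋃ v ∈ F, Z v) ⊆
      (⋃ v ∈ {v ∈ F | W v < g}, Z v) ∪ ⋃ v ∈ {v ∈ F | g < W v}, Z v := by
    intro p hp
    obtain ⟨v, hv, hpv⟩ := Set.mem_iUnion₂.mp hp
    rcases (hgap v hv).lt_or_gt with h | h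
    · exact Or.inl (Set.mem_biUnion ⟨hv, h⟩ hpv)
    · exact Or.inr (Set.mem_biUnion ⟨hv, h⟩ hpv)
  obtain ⟨p, -, hpb, hpa⟩ := isPreconnected_closed_iff.mp hconn _ _ (hclosed _) (hclosed _)
    hcover (hside _ u hu ((hgap u hu).lt_of_le hug))
    (hside _ u' hu' ((hgap u' hu').lt_of_le' hgu'))
  obtain ⟨v, ⟨hv, hvg⟩, hpv⟩ := Set.mem_iUnion₂.mp hpb
  obtain ⟨v', ⟨hv', hv'g⟩, hpv'⟩ := Set.mem_iUnion₂.mp hpa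
  have := hW v hv v' hv' ⟨p, hpv, hpv'⟩
  omega

section Chunk

variable {H : History} {K : Finset Op} {W : Op → ℕ}

lemma IsChunk.exists_forwardZone_eq (hK : IsChunk H K)
    (hW : ∀ c ∈ K, ∀ c' ∈ K, c ≠ c' → fmin H c ≤ smax H c' → W c ≤ W c' + 1)
    {u u' : Op} (hu : u ∈ K) (hu' : u' ∈ K) (huF : ForwardZone H u) (hu'F : ForwardZone H u')
    {g : ℕ} (hug : W u ≤ g) (hgu' : g ≤ W u') : ∃ v ∈ K, ForwardZone H v ∧ W v = g := by
  have hWF : ∀ v ∈ {w ∈ (K : Set Op) | ForwardZone H w},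
      ∀ v' ∈ {w ∈ (K : Set Op) | ForwardZone H w},
      (zone H v ∩ zone H v').Nonempty → W v' ≤ W v + 1 := by
    rintro v ⟨hv, hvF⟩ v' ⟨hv', hv'F⟩ ⟨t, htv, htv'⟩
    rw [zone_of_forwardZone hvF] at htv
    rw [zone_of_forwardZone hv'F] at htv'
    rcases eq_or_ne v' v with rfl | hne
    · omega
    · exact hW v' hv' v hv hne (htv'.1.trans htv.2)
  obtain ⟨v, ⟨hv, hvF⟩, hvg⟩ := exists_eq_of_isPreconnected_biUnion
    (K.finite_toSet.subset (Set.sep_subset _ _)) (fun _ _ => isClosed_Icc)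
    (fun v _ => zone_nonempty H v) hK.2.2.1.isPreconnected hWF ⟨hu, huF⟩ ⟨hu', hu'F⟩ hug hgu'
  exact ⟨v, hv, hvF, hvg⟩

lemma IsChunk.exists_forwardZone_le_add_one (hK : IsChunk H K)
    (hW : ∀ c ∈ K, ∀ c' ∈ K, c ≠ c' → fmin H c ≤ smax H c' → W c ≤ W c' + 1)
    {b : Op} (hb : b ∈ K) (hbB : ¬ ForwardZone H b) :
    (∃ v ∈ K, ForwardZone H v ∧ W v ≤ W b + 1) ∧ ∃ u ∈ K, ForwardZone H u ∧ W b ≤ W u + 1 := by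
  have hzone : zone H b ⊆ fwdUnion H K := fun t ht => hK.2.2.2 (Set.mem_biUnion ⟨hb, hbB⟩ ht)
  rw [zone_of_not_forwardZone hbB] at hzone
  have hle : smax H b ≤ fmin H b := not_lt.mp hbB
  obtain ⟨v, hv, hvF, hsv⟩ := mem_fwdUnion.mp (hzone ⟨le_rfl, hle⟩)
  obtain ⟨u, hu, huF, hfu⟩ := mem_fwdUnion.mp (hzone ⟨hle, le_rfl⟩)
  rw [zone_of_forwardZone hvF] at hsv
  rw [zone_of_forwardZone huF] at hfu
  exact ⟨⟨v, hv, hvF, hW v hv b hb (by rintro rfl; exact hbB hvF) hsv.1⟩,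
    ⟨u, hu, huF, hW b hb u hu (by rintro rfl; exact hbB huF) hfu.2⟩⟩

theorem IsChunk.card_filter_not_forwardZone_le_two (hK : IsChunk H K) (hinj : Set.InjOn W K)
    (hW : ∀ c ∈ K, ∀ c' ∈ K, c ≠ c' → fmin H c ≤ smax H c' → W c ≤ W c' + 1) :
    (K.filter (fun w => ¬ ForwardZone H w)).card ≤ 2 := by
  obtain ⟨t, ht⟩ := hK.2.1
  obtain ⟨v₀, hv₀, hv₀F, -⟩ := mem_fwdUnion.mp ht
  set ranks := (K.filter (fun w => ForwardZone H w)).image W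
  have hranks : ranks.Nonempty := ⟨W v₀, Finset.mem_image_of_mem W (by simp [hv₀, hv₀F])⟩
  set a := ranks.min' hranks
  set A := ranks.max' hranks
  obtain ⟨u, hu, hua⟩ := Finset.mem_image.mp (ranks.min'_mem hranks)
  obtain ⟨u', hu', hu'A⟩ := Finset.mem_image.mp (ranks.max'_mem hranks)
  rw [Finset.mem_filter] at hu hu'
  have hmaps : Set.MapsTo W ↑(K.filter (fun w => ¬ ForwardZone H w))
      ↑({a - 1, A + 1} : Finset ℕ) := by
    intro b hb
    obtain ⟨hbK, hbB⟩ := Finset.mem_filter.mp hb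
    obtain ⟨⟨v, hv, hvF, hvb⟩, ⟨w, hw, hwF, hbw⟩⟩ := hK.exists_forwardZone_le_add_one hW hbK hbB
    have hav : a ≤ W v := ranks.min'_le _ (Finset.mem_image_of_mem W (by simp [hv, hvF]))
    have hwA : W w ≤ A := ranks.le_max' _ (Finset.mem_image_of_mem W (by simp [hw, hwF]))
    have hout : ¬ (a ≤ W b ∧ W b ≤ A) := by
      rintro ⟨h₁, h₂⟩
      obtain ⟨c, hc, hcF, hcb⟩ := hK.exists_forwardZone_eq hW hu.1 hu'.1 hu.2 hu'.2
        (hua.trans_le h₁) (h₂.trans_eq hu'A.symm)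
      exact hbB (hinj hc hbK hcb ▸ hcF)
    simp only [Finset.coe_insert, Finset.coe_singleton, Set.mem_insert_iff,
      Set.mem_singleton_iff]
    omega
  calc (K.filter (fun w => ¬ ForwardZone H w)).card
      ≤ ({a - 1, A + 1} : Finset ℕ).card :=
        Finset.card_le_card_of_injOn W hmaps
          (hinj.mono (Finset.coe_subset.mpr (Finset.filter_subset _ K)))
    _ ≤ 2 := Finset.card_le_two

end Chunk

theorem card_filter_not_forwardZone_le_two_of_kAtomicOrder {H : History} {K : Finset Op}
    {l : List Op} (hWf : Wf H) (hK : IsChunk H K) (hnd : l.Nodup) (hval : Valid l)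
    (hka : KAtomicOrder 2 l) (hcl : ∀ c ∈ K, ∀ o ∈ cluster H c, o ∈ l) :
    (K.filter (fun w => ¬ ForwardZone H w)).card ≤ 2 :=
  hK.card_filter_not_forwardZone_le_two
    ((List.writeRank_injOn hnd).mono fun c hc =>
      show c ∈ l ∧ c.isWrite from ⟨hcl c hc c (Finset.mem_insert_self c _), (hK.1 c hc).2⟩)
    fun c hc c' hc' hne hle =>
      writeRank_le_add_one_of_fmin_le_smax hWf hnd hval hka (hK.1 c hc).1 (hK.1 c' hc').1
        (hK.1 c hc).2 (hK.1 c' hc').2 hne (hcl c hc) (hcl c' hc') hle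

/-- If a maximal chunk `K` contains three or more backward clusters, then there is
no viable total order over all the dictating writes of `K`, and consequently the
projection `H|K` is not 2-atomic. -/
theorem stmt_6 (H : History) (hWf : Wf H) (K : Finset Op) (hK : MaximalChunk H K)
    (h3 : 3 ≤ (K.filter (fun w => ¬ ForwardZone H w)).card) :
    (∀ T : List Op, TotalOrderOn K T → ¬ Viable H T) ∧ ¬ KAtomic 2 (proj H K) := by
  refine ⟨?_, ?_⟩
  · rintro T ⟨-, hTK, -⟩ ⟨T', hnd, hmem, hval, -, hka⟩
    have := card_filter_not_forwardZone_le_two_of_kAtomicOrder hWf hK.1 hnd hval hka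
      fun c hc o ho => (hmem o).mpr <| by
        rcases mem_cluster.mp ho with rfl | ⟨hoH, hr, hv⟩
        · exact Or.inl ((hTK o).mpr hc)
        · exact Or.inr ⟨hoH, hr, c, (hTK c).mpr hc, hv.symm⟩
    omega
  · rintro ⟨l, ⟨hnd, hmem⟩, hval, hka⟩
    have := card_filter_not_forwardZone_le_two_of_kAtomicOrder hWf hK.1 hnd hval hka
      fun c hc o ho => (hmem o).mpr <| Finset.mem_filter.mpr
        ⟨mem_of_mem_cluster (hK.1.1 c hc).1 ho, c, hc, ho⟩
    omega
end
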